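/- The inversion f(x) = x/⟨x,x⟩ of ℝ³\{0} is an isometry of the Radial Model, i.e., of ℝ³\{0} equipped with the metric g = (1/|x|²)·g₀. -/

import Mathlib

/- The differential of the inversion in a sphere of radius R about c is (R / |x - c|)² times a
reflection, so it multiplies inner products by (R / |x - c|)⁴, while |f(x) - c| = R² / |x - c|;
the two factors cancel in the radial metric ⟪v, w⟫ / |x - c|². -/

noncomputable section

open scoped RealInnerProductSpace

abbrev E3 := EuclideanSpace ℝ (Fin 3)

/-- Inversion in the unit sphere. -/
def invMap (y : E3) : E3 := (⟪y, y⟫)⁻¹ • y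

namespace EuclideanGeometry

variable {F : Type*} [NormedAddCommGroup F] [InnerProductSpace ℝ F] {c x : F} {R : ℝ}

theorem inner_fderiv_inversion (hx : x ≠ c) (v w : F) :
    ⟪fderiv ℝ (inversion c R) x v, fderiv ℝ (inversion c R) x w⟫
      = (R / dist x c) ^ 4 * ⟪v, w⟫ := by
  simp only [(hasFDerivAt_inversion (R := R) hx).fderiv, smul_apply, real_inner_smul_left,
    real_inner_smul_right]
  rw [← mul_assoc, ← pow_add]
  exact congrArg _ (LinearIsometryEquiv.inner_map_map _ v w)

theorem inner_fderiv_inversion_div_dist_center_sq (hx : x ≠ c) (hR : R ≠ 0) (v w : F) :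
    ⟪fderiv ℝ (inversion c R) x v, fderiv ℝ (inversion c R) x w⟫
        / dist (inversion c R x) c ^ 2
      = ⟪v, w⟫ / dist x c ^ 2 := by
  have hd : dist x c ≠ 0 := dist_ne_zero.2 hx
  rw [inner_fderiv_inversion hx, dist_inversion_center]
  field_simp

end EuclideanGeometry

theorem invMap_eq_inversion : invMap = EuclideanGeometry.inversion 0 1 := by
  ext1 y
  simp [invMap, EuclideanGeometry.inversion]

theorem stmt12 (x : E3) (hx : x ≠ 0) (v w : E3) :
    ⟪fderiv ℝ invMap x v, fderiv ℝ invMap x w⟫ / ‖invMap x‖ ^ 2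
      = ⟪v, w⟫ / ‖x‖ ^ 2 := by
  simpa [invMap_eq_inversion, dist_zero_right] using
    EuclideanGeometry.inner_fderiv_inversion_div_dist_center_sq hx one_ne_zero v w
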